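/- Monotone decrease of the expected neighbor feature for positive node features and negative τ (key step of Theorem 4.1): for every fixed a > 0, the function τ ↦ F(a, τ) is strictly increasing on (−∞, 0), i.e., F(a, τ) decreases as τ decreases from 0 toward −∞; equivalently, its partial derivative in τ is positive for all τ < 0 and a > 0. -/

import Mathlib

open MeasureTheory

/-- The standard Gaussian density `φ(x) = (1/√(2π)) e^{-x²/2}`. -/
noncomputable def phi (x : ℝ) : ℝ :=
  (Real.sqrt (2 * Real.pi))⁻¹ * Real.exp (-x ^ 2 / 2)

/-- The Gauss error function `erf(z) = (2/√π) ∫₀^z e^{-t²} dt`. -/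
noncomputable def erf (z : ℝ) : ℝ :=
  (2 / Real.sqrt Real.pi) * ∫ t in (0 : ℝ)..z, Real.exp (-t ^ 2)

/-- The complementary error function `erfc(z) = 1 - erf(z)`. -/
noncomputable def erfc (z : ℝ) : ℝ := 1 - erf z

/-- The expected class-controlled feature `F(a, τ)` of a sampled neighbor of a node with
class-controlled feature `a` in the asymptotic CSBM-X model with A-X dependence strength
`τ`:
`F(a,τ) = τ (erfc((τ-a)/√2) - e^{2τa} erfc((τ+a)/√2)) / (erfc((τ-a)/√2) + e^{2τa} erfc((τ+a)/√2))`. -/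
noncomputable def F (a τ : ℝ) : ℝ :=
  τ * (erfc ((τ - a) / Real.sqrt 2) -
        Real.exp (2 * τ * a) * erfc ((τ + a) / Real.sqrt 2)) /
    (erfc ((τ - a) / Real.sqrt 2) +
      Real.exp (2 * τ * a) * erfc ((τ + a) / Real.sqrt 2))

/-!
Write `F a τ = τ (P - Q) / (P + Q)` with `P = erfc ((τ - a) / √2)` and
`Q = e^{2τa} erfc ((τ + a) / √2)`. Since `e^{2τa} φ(τ + a) = φ(τ - a)`, we have
`P' = -2φ(τ - a)` and `Q' = 2aQ - 2φ(τ - a)`, so the numerator of `∂F/∂τ` is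
`(P - Q) (P + Q + 4τφ(τ - a)) - 4aτPQ`. For `τ < 0 < a` both summands are positive:
`P - Q` is decreasing (its derivative is `-2aQ`) and positive at `τ = 0`, `P > 1`, and
`4|τ|φ(τ - a) ≤ 4|τ|φ(τ) ≤ 4e^{-1/2}/√(2π) < 1` because `8 < πe`.
-/

open Real Set

lemma integrable_exp_neg_sq : Integrable fun t : ℝ => exp (-t ^ 2) := by
  simpa using integrable_exp_neg_mul_sq one_pos

lemma hasDerivAt_erf (z : ℝ) : HasDerivAt erf (2 / √π * exp (-z ^ 2)) z :=
  ((continuous_exp.comp (continuous_pow 2).neg).integral_hasStrictDerivAt 0 z).hasDerivAt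
    |>.const_mul _

lemma hasDerivAt_erfc (z : ℝ) : HasDerivAt erfc (-(2 / √π * exp (-z ^ 2))) z :=
  (hasDerivAt_erf z).const_sub 1

lemma erf_strictMono : StrictMono erf :=
  strictMono_of_deriv_pos fun z => (hasDerivAt_erf z).deriv ▸ by positivity

lemma erfc_strictAnti : StrictAnti erfc := fun _ _ h => sub_lt_sub_left (erf_strictMono h) 1

lemma one_lt_erfc {z : ℝ} (hz : z < 0) : 1 < erfc z := by
  have : erf z < erf 0 := erf_strictMono hz
  simp only [erfc, erf, intervalIntegral.integral_same, mul_zero] at this ⊢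
  linarith

lemma erfc_eq_integral_Ioi (z : ℝ) : erfc z = 2 / √π * ∫ t in Ioi z, exp (-t ^ 2) := by
  have split (w : ℝ) :
      (∫ t in Iic w, exp (-t ^ 2)) + ∫ t in Ioi w, exp (-t ^ 2) = √π := by
    rw [intervalIntegral.integral_Iic_add_Ioi integrable_exp_neg_sq.integrableOn
      integrable_exp_neg_sq.integrableOn]
    simpa using integral_gaussian 1
  have half : ∫ t in Ioi (0 : ℝ), exp (-t ^ 2) = √π / 2 := by
    simpa using integral_gaussian_Ioi 1
  rw [erfc, erf, ← intervalIntegral.integral_Iic_sub_Iic integrable_exp_neg_sq.integrableOn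
    integrable_exp_neg_sq.integrableOn]
  have hπ : √π ≠ 0 := by positivity
  field_simp
  linarith [split z, split 0]

lemma erfc_pos (z : ℝ) : 0 < erfc z := by
  rw [erfc_eq_integral_Ioi]
  refine mul_pos (by positivity) ?_
  rw [setIntegral_pos_iff_support_of_nonneg_ae (.of_forall fun t => (exp_pos _).le)
    integrable_exp_neg_sq.integrableOn]
  simp [Function.support, exp_ne_zero]

lemma hasDerivAt_erfc_div_sqrt_two (x : ℝ) :
    HasDerivAt (fun x => erfc (x / √2)) (-(2 * phi x)) x := by
  refine ((hasDerivAt_erfc _).comp x ((hasDerivAt_id x).div_const √2)).congr_deriv ?_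
  have h2 : √2 ^ 2 = 2 := sq_sqrt zero_le_two
  rw [phi, sqrt_mul zero_le_two, div_pow, h2]
  field_simp
  simp only [id]

lemma exp_mul_phi_add (a x : ℝ) : exp (2 * x * a) * phi (x + a) = phi (x - a) := by
  rw [phi, phi, mul_left_comm, ← exp_add]
  ring_nf

lemma phi_le_phi_of_abs_le {x y : ℝ} (h : |x| ≤ |y|) : phi y ≤ phi x := by
  have : x ^ 2 ≤ y ^ 2 := sq_le_sq.2 h
  unfold phi
  gcongr

lemma four_mul_abs_mul_phi_lt_one (x : ℝ) : 4 * |x| * phi x < 1 := by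
  have peak : |x| * exp (-x ^ 2 / 2) ≤ exp (-(1 / 2)) := by
    have : |x| ≤ exp ((x ^ 2 - 1) / 2) := by
      nlinarith [add_one_le_exp ((x ^ 2 - 1) / 2), sq_abs x, sq_nonneg (|x| - 1)]
    calc |x| * exp (-x ^ 2 / 2) ≤ exp ((x ^ 2 - 1) / 2) * exp (-x ^ 2 / 2) := by gcongr
      _ = exp (-(1 / 2)) := by rw [← exp_add]; ring_nf
  have const : 4 * exp (-(1 / 2)) < √(2 * π) := by
    rw [lt_sqrt (by positivity), mul_pow, ← exp_nat_mul]
    norm_num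
    rw [exp_neg, ← div_eq_mul_inv, div_lt_iff₀ (exp_pos 1)]
    nlinarith [pi_gt_d2, exp_one_gt_d9]
  rw [phi, ← mul_assoc, mul_comm _ (√(2 * π))⁻¹, mul_assoc, inv_mul_lt_iff₀ (by positivity),
    mul_one, mul_assoc]
  calc 4 * (|x| * exp (-x ^ 2 / 2)) ≤ 4 * exp (-(1 / 2)) := by gcongr
    _ < √(2 * π) := const

namespace F

noncomputable def P (a τ : ℝ) : ℝ := erfc ((τ - a) / √2)

noncomputable def Q (a τ : ℝ) : ℝ := exp (2 * τ * a) * erfc ((τ + a) / √2)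

variable {a τ : ℝ}

lemma hasDerivAt_P (a τ : ℝ) : HasDerivAt (P a) (-(2 * phi (τ - a))) τ :=
  (hasDerivAt_erfc_div_sqrt_two (τ - a)).comp_sub_const τ a

lemma hasDerivAt_Q (a τ : ℝ) : HasDerivAt (Q a) (2 * a * Q a τ - 2 * phi (τ - a)) τ := by
  have hexp : HasDerivAt (fun τ => exp (2 * τ * a)) (exp (2 * τ * a) * (2 * a)) τ :=
    HasDerivAt.exp (by simpa using ((hasDerivAt_id τ).const_mul 2).mul_const a)
  refine (hexp.mul ((hasDerivAt_erfc_div_sqrt_two (τ + a)).comp_add_const τ a)).congr_deriv ?_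
  rw [Q, ← exp_mul_phi_add]
  ring

lemma P_pos (a τ : ℝ) : 0 < P a τ := erfc_pos _

lemma Q_pos (a τ : ℝ) : 0 < Q a τ := mul_pos (exp_pos _) (erfc_pos _)

lemma one_lt_P (h : τ < a) : 1 < P a τ :=
  one_lt_erfc (div_neg_of_neg_of_pos (sub_neg.2 h) (by positivity))

lemma P_sub_Q_strictAnti (ha : 0 < a) : StrictAnti fun τ => P a τ - Q a τ :=
  strictAnti_of_deriv_neg fun τ => by
    have : HasDerivAt (fun τ => P a τ - Q a τ) _ τ := (hasDerivAt_P a τ).sub (hasDerivAt_Q a τ)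
    rw [this.deriv]
    linarith [mul_pos ha (Q_pos a τ)]

lemma Q_lt_P (ha : 0 < a) (hτ : τ ≤ 0) : Q a τ < P a τ := by
  have at_zero : 0 < P a 0 - Q a 0 := by
    have : erfc (a / √2) < erfc (-a / √2) := erfc_strictAnti (by gcongr; linarith)
    simpa [P, Q, neg_div] using this
  linarith [(P_sub_Q_strictAnti ha).antitone hτ]

lemma hasDerivAt (a τ : ℝ) :
    HasDerivAt (F a) (((P a τ - Q a τ) * (P a τ + Q a τ + 4 * τ * phi (τ - a))
      - 4 * a * τ * P a τ * Q a τ) / (P a τ + Q a τ) ^ 2) τ := by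
  have hP := hasDerivAt_P a τ
  have hQ := hasDerivAt_Q a τ
  have hpos : P a τ + Q a τ ≠ 0 := (add_pos (P_pos a τ) (Q_pos a τ)).ne'
  refine (((hasDerivAt_id τ).mul (hP.sub hQ)).div (hP.add hQ) hpos).congr_deriv ?_
  simp only [Pi.add_apply, Pi.sub_apply, Pi.mul_apply, id]
  field_simp
  ring

lemma deriv_pos (ha : 0 < a) (hτ : τ < 0) : 0 < deriv (F a) τ := by
  rw [(hasDerivAt a τ).deriv]
  have hQP := Q_lt_P ha hτ.le
  have hφ : 4 * -τ * phi (τ - a) < 1 := by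
    have : |τ| ≤ |τ - a| := by
      rw [abs_of_neg hτ, abs_of_neg (by linarith : τ - a < 0)]
      linarith
    calc 4 * -τ * phi (τ - a) ≤ 4 * -τ * phi τ :=
          mul_le_mul_of_nonneg_left (phi_le_phi_of_abs_le this) (by linarith)
      _ = 4 * |τ| * phi τ := by rw [abs_of_neg hτ]
      _ < 1 := four_mul_abs_mul_phi_lt_one τ
  have h₁ : 0 < (P a τ - Q a τ) * (P a τ + Q a τ + 4 * τ * phi (τ - a)) :=
    mul_pos (sub_pos.2 hQP) (by linarith [one_lt_P (hτ.trans ha), Q_pos a τ])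
  have h₂ : 0 < a * -τ * P a τ * Q a τ :=
    mul_pos (mul_pos (mul_pos ha (neg_pos.2 hτ)) (P_pos a τ)) (Q_pos a τ)
  exact div_pos (by linarith) (pow_pos (add_pos (P_pos a τ) (Q_pos a τ)) 2)

end F

/-- key step of Theorem 4.1: for every fixed `a > 0`, the map
`τ ↦ F(a, τ)` is strictly increasing on `(-∞, 0)`, i.e. `F(a, τ)` decreases as `τ`
decreases from `0` toward `-∞`. -/
theorem expected_neighbor_feature_strictMono (a : ℝ) (ha : 0 < a) :
    StrictMonoOn (fun τ => F a τ) (Set.Iio (0 : ℝ)) :=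
  strictMonoOn_of_deriv_pos (convex_Iio 0)
    (fun τ _ => (F.hasDerivAt a τ).continuousAt.continuousWithinAt)
    fun τ hτ => F.deriv_pos ha (by simpa using hτ)
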